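/- (Bauer–Fike.) Let A be a diagonalizable complex d×d matrix with eigendecomposition A = V Λ V⁻¹, where Λ is diagonal with entries λ₁, …, λ_d. Let E be any complex d×d matrix with ‖E‖₂ ≤ δ, and let λ̃ be any eigenvalue of A + E. Then min_{1 ≤ k ≤ d} |λ̃ − λ_k| ≤ κ(V) · δ, where κ(V) = ‖V‖₂‖V⁻¹‖₂. -/

import Mathlib

open Matrix

/-- The operator norm of a complex matrix, induced by the Euclidean (`ℓ²`) norm. -/
noncomputable def l2OpNorm {d : ℕ} (A : Matrix (Fin d) (Fin d) ℂ) : ℝ :=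
  ‖LinearMap.toContinuousLinearMap (Matrix.toEuclideanLin A)‖

/-!
With `y = V⁻¹ x` the eigen-equation `(A + E) x = λ̃ x` becomes `(λ̃ - Λ) y = (V⁻¹ E V) y`.
A diagonal matrix shrinks no vector by more than its smallest entry in modulus, so
`min_k |λ̃ - λ_k| ‖y‖ ≤ ‖V⁻¹ E V‖ ‖y‖ ≤ κ(V) ‖E‖ ‖y‖`, and `y ≠ 0` since `x ≠ 0`.
-/

open scoped Matrix.Norms.L2Operator

namespace Matrix

section CommRing

variable {n R : Type*} [Fintype n] [DecidableEq n] [CommRing R]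

theorem diagonal_sub_mulVec_eq_of_mulVec_eq_smul {A V E : Matrix n n R} {lam : n → R}
    (hV : IsUnit V.det) (hA : A = V * diagonal lam * V⁻¹) {μ : R} {x : n → R}
    (h : (A + E) *ᵥ x = μ • x) :
    diagonal (fun i => μ - lam i) *ᵥ (V⁻¹ *ᵥ x) = (V⁻¹ * E * V) *ᵥ (V⁻¹ *ᵥ x) := by
  have hVx : V *ᵥ (V⁻¹ *ᵥ x) = x := by rw [mulVec_mulVec, mul_nonsing_inv _ hV, one_mulVec]
  have hAx : V⁻¹ *ᵥ (A *ᵥ x) = diagonal lam *ᵥ (V⁻¹ *ᵥ x) := by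
    rw [hA, mulVec_mulVec, mulVec_mulVec, ← Matrix.mul_assoc, ← Matrix.mul_assoc,
      nonsing_inv_mul _ hV, Matrix.one_mul]
  have h' := congrArg (V⁻¹ *ᵥ ·) h
  simp only [add_mulVec, mulVec_add, hAx, mulVec_smul] at h'
  rw [← mulVec_mulVec, ← mulVec_mulVec, hVx, eq_sub_of_add_eq' h']
  ext i
  simp only [mulVec_diagonal, Pi.sub_apply, Pi.smul_apply, smul_eq_mul, sub_mul]

end CommRing

section L2OpNorm

variable {𝕜 n : Type*} [RCLike 𝕜] [Fintype n] [DecidableEq n]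

theorem mul_norm_le_norm_diagonal_mulVec {v : n → 𝕜} {c : ℝ} (hc₀ : 0 ≤ c)
    (hc : ∀ i, c ≤ ‖v i‖) (y : n → 𝕜) : c * ‖WithLp.toLp 2 y‖ ≤ ‖WithLp.toLp 2 (diagonal v *ᵥ y)‖ := by
  refine le_of_sq_le_sq ?_ (norm_nonneg _)
  rw [mul_pow, EuclideanSpace.norm_sq_eq, EuclideanSpace.norm_sq_eq, Finset.mul_sum]
  gcongr with i
  rw [WithLp.ofLp_toLp, WithLp.ofLp_toLp, mulVec_diagonal, norm_mul, mul_pow]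
  gcongr
  exact hc i

theorem exists_norm_le_l2_opNorm_of_diagonal_mulVec_eq {v : n → 𝕜} {B : Matrix n n 𝕜}
    {y : n → 𝕜} (hy : y ≠ 0) (h : diagonal v *ᵥ y = B *ᵥ y) : ∃ k, ‖v k‖ ≤ ‖B‖ := by
  have : Nonempty n := by
    by_contra hn
    exact hy (funext fun i => (hn ⟨i⟩).elim)
  obtain ⟨k, hk⟩ := Finite.exists_min fun i => ‖v i‖
  refine ⟨k, le_of_mul_le_mul_right ?_ (norm_pos_iff.2 ((WithLp.toLp_eq_zero 2).not.2 hy))⟩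
  calc ‖v k‖ * ‖WithLp.toLp 2 y‖ ≤ ‖WithLp.toLp 2 (diagonal v *ᵥ y)‖ :=
        mul_norm_le_norm_diagonal_mulVec (norm_nonneg _) hk y
    _ = ‖WithLp.toLp 2 (B *ᵥ y)‖ := by rw [h]
    _ ≤ ‖B‖ * ‖WithLp.toLp 2 y‖ := l2_opNorm_mulVec B (WithLp.toLp 2 y)

theorem l2_opNorm_inv_mul_mul_le (V E : Matrix n n 𝕜) : ‖V⁻¹ * E * V‖ ≤ ‖V‖ * ‖V⁻¹‖ * ‖E‖ :=
  calc ‖V⁻¹ * E * V‖ ≤ ‖V⁻¹‖ * ‖E‖ * ‖V‖ :=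
        (l2_opNorm_mul _ _).trans (by gcongr; exact l2_opNorm_mul _ _)
    _ = ‖V‖ * ‖V⁻¹‖ * ‖E‖ := by ring

end L2OpNorm

end Matrix

theorem l2OpNorm_eq_l2_opNorm {d : ℕ} (A : Matrix (Fin d) (Fin d) ℂ) : l2OpNorm A = ‖A‖ := rfl

/-- **Bauer–Fike.** Let `A = V Λ V⁻¹` be a diagonalizable complex
`d × d` matrix with `Λ = diagonal λ`. If `‖E‖₂ ≤ δ` and `λ̃` is an eigenvalue of
`A + E` (i.e. `(A + E)x = λ̃x` for some `x ≠ 0`), then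
`min_k |λ̃ − λ_k| ≤ κ(V)·δ` where `κ(V) = ‖V‖₂·‖V⁻¹‖₂`. -/
theorem bauer_fike
    {d : ℕ} (A V E : Matrix (Fin d) (Fin d) ℂ) (lam : Fin d → ℂ)
    (hV : IsUnit V.det)
    (hA : A = V * Matrix.diagonal lam * V⁻¹)
    (δ : ℝ) (hE : l2OpNorm E ≤ δ)
    (lamPert : ℂ) (x : Fin d → ℂ) (hx : x ≠ 0)
    (heig : (A + E).mulVec x = lamPert • x) :
    ∃ k, ‖lamPert - lam k‖ ≤ (l2OpNorm V * l2OpNorm V⁻¹) * δ := by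
  have hy : V⁻¹ *ᵥ x ≠ 0 := fun h0 => hx <| by
    rw [← one_mulVec x, ← mul_nonsing_inv V hV, ← mulVec_mulVec, h0, mulVec_zero]
  obtain ⟨k, hk⟩ := exists_norm_le_l2_opNorm_of_diagonal_mulVec_eq hy
    (diagonal_sub_mulVec_eq_of_mulVec_eq_smul hV hA heig)
  rw [l2OpNorm_eq_l2_opNorm] at hE
  simp only [l2OpNorm_eq_l2_opNorm]
  exact ⟨k, hk.trans <| (l2_opNorm_inv_mul_mul_le V E).trans <| by gcongr⟩
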